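/- Every 1-skeletal simplicial set, i.e. a simplicial set in which every simplex of dimension ≥ 2 is degenerate (lies in the image of some degeneracy map), is 2-Segal. -/

import Mathlib

open CategoryTheory Simplicial

universe u

namespace Seg

/-- Restriction of a simplex along a monotone map of standard simplices. -/
def res (X : SSet.{u}) {m n : ℕ} (f : Fin (m + 1) →o Fin (n + 1)) : X _⦋n⦌ → X _⦋m⦌ :=
  X.map (SimplexCategory.mkHom f).op

/-- The monotone injection `[l] → [n]`, `k ↦ i + k`, i.e. the inclusion of the
interval `{i, i+1, …, i+l}` into `{0, …, n}`. -/
def interval {n : ℕ} (i l : ℕ) (h : i + l ≤ n) : Fin (l + 1) →o Fin (n + 1) where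
  toFun k := ⟨i + k.1, by have := k.isLt; omega⟩
  monotone' := by
    intro a b hab
    have h' : a.1 ≤ b.1 := hab
    simp only [Fin.mk_le_mk]
    omega

/-- The monotone injection with image `{0,…,i} ∪ {j,…,n}` (where `i < j ≤ n`). -/
def outer {n : ℕ} (i j : ℕ) (hij : i < j) (hj : j ≤ n) :
    Fin (n - (j - i) + 2) →o Fin (n + 1) where
  toFun k := ⟨if k.1 ≤ i then k.1 else k.1 + (j - i) - 1, by have := k.isLt; split <;> omega⟩
  monotone' := by
    intro a b hab
    have h' : a.1 ≤ b.1 := hab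
    have ha := a.isLt
    have hb := b.isLt
    simp only [Fin.mk_le_mk]
    split_ifs <;> omega

/-- The monotone map `[1] → [l]` sending `0 ↦ 0` and `1 ↦ l`. -/
def ends (l : ℕ) : Fin 2 →o Fin (l + 1) where
  toFun k := ⟨k.1 * l, by
    have hk : k.1 ≤ 1 := Nat.lt_succ_iff.mp k.isLt
    have h2 : k.1 * l ≤ 1 * l := Nat.mul_le_mul hk (le_refl l)
    omega⟩
  monotone' := by
    intro a b hab
    have h' : a.1 ≤ b.1 := hab
    simp only [Fin.mk_le_mk]
    exact Nat.mul_le_mul h' (le_refl l)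

/-- The map `[0] → [n]` picking out the vertex `i`. -/
def vert {n : ℕ} (i : ℕ) (h : i ≤ n) : Fin 1 →o Fin (n + 1) where
  toFun _ := ⟨i, by omega⟩
  monotone' := fun _ _ _ => le_refl _

/-- The monotone surjection `[m+1] → [m]` hitting `i` twice; restriction along it is the
degeneracy `s_i : X_m → X_{m+1}`. -/
def degen {m : ℕ} (i : ℕ) (h : i ≤ m) : Fin (m + 2) →o Fin (m + 1) where
  toFun k := ⟨if k.1 ≤ i then k.1 else k.1 - 1, by have := k.isLt; split <;> omega⟩
  monotone' := by
    intro a b hab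
    have h' : a.1 ≤ b.1 := hab
    simp only [Fin.mk_le_mk]
    split_ifs <;> omega

/-- The 2-Segal map associated to `0 ≤ i < j ≤ n`, i.e. the canonical map
`X_n → X_{{0,…,i}∪{j,…,n}} ×_{X_{{i,j}}} X_{{i,…,j}}`, is a bijection.  (A map into a
fiber product of sets is a bijection iff every compatible pair has a unique preimage.) -/
def TwoSegalMapBij (X : SSet.{u}) (n i j : ℕ) (hij : i < j) (hj : j ≤ n) : Prop :=
  ∀ (a : X _⦋n - (j - i) + 1⦌) (b : X _⦋j - i⦌),
    res X (interval i 1 (by omega)) a = res X (ends (j - i)) b →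
    ∃! x : X _⦋n⦌,
      res X (outer i j hij hj) x = a ∧ res X (interval i (j - i) (by omega)) x = b

/-- A simplicial set is 2-Segal if all the 2-Segal maps are bijections. -/
def IsTwoSegal (X : SSet.{u}) : Prop :=
  ∀ (n i j : ℕ), 3 ≤ n → ∀ (hij : i < j) (hj : j ≤ n), TwoSegalMapBij X n i j hij hj

/-- A simplicial set is Segal (1-Segal) if for each `n ≥ 2` the map
`X_n → X_1 ×_{X_0} ⋯ ×_{X_0} X_1` (restriction to the edges `{k,k+1}`) is a bijection. -/
def IsSegal (X : SSet.{u}) : Prop :=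
  ∀ (n : ℕ), 2 ≤ n → ∀ e : Fin n → X _⦋1⦌,
    (∀ (k : ℕ) (hk : k + 1 < n),
      res X (vert 1 (le_refl 1)) (e ⟨k, by omega⟩) =
        res X (vert 0 (Nat.zero_le 1)) (e ⟨k + 1, hk⟩)) →
    ∃! x : X _⦋n⦌, ∀ k : Fin n, res X (interval k.1 1 (by have := k.isLt; omega)) x = e k

end Seg

/-!
In a 1-skeletal simplicial set, peeling off degeneracies one at a time shows that every simplex of
positive dimension is either a degenerate vertex or the pullback `θ^* e` of a nondegenerate edge
`e` along a surjection `θ : [n] → [1]`. In the second case `e` occurs exactly once on the spine,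
all other spine edges being degenerate, so every simplex is determined by its spine; this gives
uniqueness in the 2-Segal condition, since the spine of `[n]` is covered by
`{0,…,i} ∪ {j,…,n}` and `{i,…,j}`. For existence, look at the common edge `{i, j}` of the two
given simplices `a` and `b`. If it is degenerate, so is `b` (it is a degenerate vertex), and `a`
pulled back along the retraction collapsing `{i,…,j}` onto `{i, i+1}` is a solution. Otherwise
`a = θ^* e` with the jump of `θ` at `i`, and `b` pulled back along the retraction of `[n]` onto
`{i,…,j}` is a solution.
-/

namespace Seg

@[simp] lemma interval_apply_val {n i l : ℕ} (h : i + l ≤ n) (k : Fin (l + 1)) :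
    (interval i l h k).1 = i + k.1 := rfl

@[simp] lemma outer_apply_val {n i j : ℕ} (hij : i < j) (hj : j ≤ n)
    (k : Fin (n - (j - i) + 2)) :
    (outer i j hij hj k).1 = if k.1 ≤ i then k.1 else k.1 + (j - i) - 1 := rfl

@[simp] lemma ends_apply_val (l : ℕ) (k : Fin 2) : (ends l k).1 = k.1 * l := rfl

@[simp] lemma degen_apply_val {m i : ℕ} (h : i ≤ m) (k : Fin (m + 2)) :
    (degen i h k).1 = if k.1 ≤ i then k.1 else k.1 - 1 := rfl

variable {X : SSet.{u}}

lemma res_res {k m n : ℕ} (f : Fin (m + 1) →o Fin (n + 1)) (g : Fin (n + 1) →o Fin (k + 1))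
    (x : X _⦋k⦌) : res X f (res X g x) = res X (g.comp f) x := by
  simp only [res, ← Functor.map_comp_apply, ← op_comp]
  rfl

lemma res_id {n : ℕ} (x : X _⦋n⦌) : res X OrderHom.id x = x :=
  Functor.map_id_apply X _ x

lemma res_eq_res_of_comp_eq {l m n : ℕ} {f : Fin (m + 1) →o Fin (n + 1)}
    {g : Fin (l + 1) →o Fin (n + 1)} {h : Fin (m + 1) →o Fin (l + 1)} (hf : g.comp h = f)
    {x x' : X _⦋n⦌} (hx : res X g x = res X g x') : res X f x = res X f x' := by
  rw [← hf, ← res_res, ← res_res, hx]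

def collapse (n : ℕ) : Fin (n + 1) →o Fin 1 := OrderHom.const _ 0

lemma collapse_comp {m n : ℕ} (f : Fin (m + 1) →o Fin (n + 1)) :
    (collapse n).comp f = collapse m :=
  OrderHom.ext _ _ (Subsingleton.elim _ _)

lemma collapse_zero : collapse 0 = OrderHom.id :=
  OrderHom.ext _ _ (Subsingleton.elim _ _)

lemma res_collapse_injective (n : ℕ) : Function.Injective (res X (collapse n)) := by
  intro v v' h
  have h0 := congrArg (res X (OrderHom.const (Fin 1) (0 : Fin (n + 1)))) h
  rwa [res_res, res_res, collapse_comp, collapse_zero, res_id, res_id] at h0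

def IsTotallyDegenerate {n : ℕ} (x : X _⦋n⦌) : Prop :=
  ∃ v : X _⦋0⦌, res X (collapse n) v = x

lemma IsTotallyDegenerate.res {m n : ℕ} {x : X _⦋n⦌} (hx : IsTotallyDegenerate x)
    (f : Fin (m + 1) →o Fin (n + 1)) : IsTotallyDegenerate (res X f x) := by
  obtain ⟨v, rfl⟩ := hx
  exact ⟨v, by rw [res_res, collapse_comp]⟩

lemma isTotallyDegenerate_res_of_apply_eq {n : ℕ} {f : Fin (1 + 1) →o Fin (n + 1)}
    (hf : f 0 = f 1) (x : X _⦋n⦌) : IsTotallyDegenerate (res X f x) := by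
  have : (OrderHom.const (Fin 1) (f 0)).comp (collapse 1) = f := by
    ext q
    fin_cases q <;> simp [collapse, hf]
  exact ⟨res X (OrderHom.const (Fin 1) (f 0)) x, by rw [res_res, this]⟩

-- The codomain is spelled `Fin (1 + 1)`, as in `res`, rather than `Fin 2`: simp lemmas about
-- `Fin.val` of an application only fire when these agree syntactically (hence also the
-- `Nat.reduceAdd` in some `simp only` calls below).
def splitAt {n : ℕ} (p : ℕ) : Fin (n + 1) →o Fin (1 + 1) where
  toFun q := ⟨if q.1 ≤ p then 0 else 1, by split <;> omega⟩
  monotone' a b hab := by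
    have : a.1 ≤ b.1 := hab
    simp only [Fin.mk_le_mk]
    split_ifs <;> omega

@[simp] lemma splitAt_apply_val {n : ℕ} (p : ℕ) (q : Fin (n + 1)) :
    (splitAt p q).1 = if q.1 ≤ p then 0 else 1 := rfl

lemma splitAt_comp_degen {n p i : ℕ} (hi : i ≤ n) :
    (splitAt p).comp (degen i hi) = splitAt (if i ≤ p then p + 1 else p) := by
  ext q
  simp only [OrderHom.comp_coe, Function.comp_apply, splitAt_apply_val, degen_apply_val]
  split_ifs <;> omega

lemma splitAt_comp_ends {n p : ℕ} (hp : p < n) : (splitAt p).comp (ends n) = OrderHom.id := by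
  ext q
  fin_cases q <;> simp [hp]

lemma splitAt_comp_interval_self {n p : ℕ} (hp : p < n) :
    (splitAt p).comp (interval p 1 hp) = OrderHom.id := by
  ext q
  fin_cases q <;> simp

lemma isTotallyDegenerate_res_interval_res_splitAt {n p k : ℕ} (hk : k < n) (hkp : k ≠ p)
    (e : X _⦋1⦌) : IsTotallyDegenerate (res X (interval k 1 hk) (res X (splitAt p) e)) := by
  rw [res_res]
  refine isTotallyDegenerate_res_of_apply_eq (Fin.ext ?_) e
  simp only [OrderHom.comp_coe, Function.comp_apply, splitAt_apply_val, interval_apply_val,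
    Fin.val_zero, Fin.val_one]
  grind

lemma res_interval_res_splitAt_self {n p : ℕ} (hp : p < n) (e : X _⦋1⦌) :
    res X (interval p 1 hp) (res X (splitAt p) e) = e := by
  rw [res_res, splitAt_comp_interval_self, res_id]

def IsOneSkeletal (X : SSet.{u}) : Prop :=
  ∀ (m : ℕ), 1 ≤ m → ∀ x : X _⦋m + 1⦌,
    ∃ (i : ℕ) (hi : i ≤ m) (y : X _⦋m⦌), res X (degen i hi) y = x

namespace IsOneSkeletal

theorem isTotallyDegenerate_or_exists_splitAt (hX : IsOneSkeletal X) {n : ℕ} (hn : 1 ≤ n)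
    (x : X _⦋n⦌) :
    IsTotallyDegenerate x ∨
      ∃ p < n, ∃ e : X _⦋1⦌, ¬ IsTotallyDegenerate e ∧ res X (splitAt p) e = x := by
  induction n, hn using Nat.le_induction with
  | base =>
    by_cases hx : IsTotallyDegenerate x
    · exact .inl hx
    · have : (splitAt 0 : Fin (1 + 1) →o Fin (1 + 1)) = OrderHom.id := by
        ext q
        fin_cases q <;> rfl
      exact .inr ⟨0, one_pos, x, hx, by rw [this, res_id]⟩
  | succ n hn ih =>
    obtain ⟨i, hi, y, rfl⟩ := hX n hn x
    rcases ih y with hy | ⟨p, hp, e, he, rfl⟩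
    · exact .inl (hy.res _)
    · refine .inr ⟨_, ?_, e, he, by rw [res_res, splitAt_comp_degen]⟩
      split_ifs <;> omega

theorem eq_res_splitAt_of_not_isTotallyDegenerate (hX : IsOneSkeletal X) {n p : ℕ} (hp : p < n)
    (x : X _⦋n⦌) (hx : ¬ IsTotallyDegenerate (res X (interval p 1 hp) x)) :
    res X (splitAt p) (res X (interval p 1 hp) x) = x := by
  rcases hX.isTotallyDegenerate_or_exists_splitAt (by omega) x with hx' | ⟨q, hq, e, -, rfl⟩
  · exact absurd (hx'.res _) hx
  · obtain rfl : q = p := by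
      by_contra hqp
      exact hx (isTotallyDegenerate_res_interval_res_splitAt hp (Ne.symm hqp) e)
    rw [res_interval_res_splitAt_self]

theorem isTotallyDegenerate_of_res_ends (hX : IsOneSkeletal X) {n : ℕ} (hn : 1 ≤ n)
    {x : X _⦋n⦌} (hx : IsTotallyDegenerate (res X (ends n) x)) : IsTotallyDegenerate x := by
  rcases hX.isTotallyDegenerate_or_exists_splitAt hn x with hx' | ⟨p, hp, e, he, rfl⟩
  · exact hx'
  · rw [res_res, splitAt_comp_ends hp, res_id] at hx
    exact absurd hx he

theorem eq_of_res_interval_one_eq (hX : IsOneSkeletal X) {n : ℕ} (hn : 1 ≤ n) {x x' : X _⦋n⦌}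
    (h : ∀ k (hk : k + 1 ≤ n), res X (interval k 1 hk) x = res X (interval k 1 hk) x') :
    x = x' := by
  have of_not_isTotallyDegenerate : ∀ {y y' : X _⦋n⦌}
      (_ : ∀ k (hk : k + 1 ≤ n), res X (interval k 1 hk) y = res X (interval k 1 hk) y')
      (p : ℕ) (hp : p < n), ¬ IsTotallyDegenerate (res X (interval p 1 hp) y) → y = y' := by
    intro y y' h p hp hy
    rw [← hX.eq_res_splitAt_of_not_isTotallyDegenerate hp y hy,
      ← hX.eq_res_splitAt_of_not_isTotallyDegenerate hp y' (h p hp ▸ hy), h p hp]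
  rcases hX.isTotallyDegenerate_or_exists_splitAt hn x with ⟨v, rfl⟩ | ⟨p, hp, e, he, rfl⟩
  · rcases hX.isTotallyDegenerate_or_exists_splitAt hn x' with ⟨v', rfl⟩ | ⟨q, hq, e', he', rfl⟩
    · have h0 := h 0 hn
      rw [res_res, res_res, collapse_comp] at h0
      rw [res_collapse_injective 1 h0]
    · refine (of_not_isTotallyDegenerate (fun k hk => (h k hk).symm) q hq ?_).symm
      rwa [res_interval_res_splitAt_self]
  · refine of_not_isTotallyDegenerate h p hp ?_
    rwa [res_interval_res_splitAt_self]

end IsOneSkeletal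

def outerRetraction {n : ℕ} (i j : ℕ) (hj : j ≤ n) : Fin (n + 1) →o Fin (n - (j - i) + 2) where
  toFun p := ⟨if p.1 ≤ i then p.1 else if p.1 ≤ j then i + 1 else p.1 - (j - i) + 1, by
    have := p.isLt; split_ifs <;> omega⟩
  monotone' a b hab := by
    have : a.1 ≤ b.1 := hab
    simp only [Fin.mk_le_mk]
    split_ifs <;> omega

@[simp] lemma outerRetraction_apply_val {n : ℕ} (i j : ℕ) (hj : j ≤ n) (p : Fin (n + 1)) :
    (outerRetraction i j hj p).1 =
      if p.1 ≤ i then p.1 else if p.1 ≤ j then i + 1 else p.1 - (j - i) + 1 := rfl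

def intervalRetraction {n : ℕ} (i j : ℕ) : Fin (n + 1) →o Fin (j - i + 1) where
  toFun p := ⟨if p.1 ≤ i then 0 else if p.1 ≤ j then p.1 - i else j - i, by split_ifs <;> omega⟩
  monotone' a b hab := by
    have : a.1 ≤ b.1 := hab
    simp only [Fin.mk_le_mk]
    split_ifs <;> omega

@[simp] lemma intervalRetraction_apply_val {n : ℕ} (i j : ℕ) (p : Fin (n + 1)) :
    (intervalRetraction i j p).1 = if p.1 ≤ i then 0 else if p.1 ≤ j then p.1 - i else j - i :=
  rfl

section TwoSegal

variable {n i j : ℕ} (hij : i < j) (hj : j ≤ n)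

lemma res_interval_one_eq_of_res_outer_eq_of_res_interval_eq {x x' : X _⦋n⦌}
    (ha : res X (outer i j hij hj) x = res X (outer i j hij hj) x')
    (hb : res X (interval i (j - i) (by omega)) x = res X (interval i (j - i) (by omega)) x')
    (k : ℕ) (hk : k + 1 ≤ n) : res X (interval k 1 hk) x = res X (interval k 1 hk) x' := by
  rcases lt_or_ge k i with hki | hik
  · refine res_eq_res_of_comp_eq (h := interval k 1 (by omega)) ?_ ha
    ext q
    simp only [Nat.reduceAdd, OrderHom.comp_coe, Function.comp_apply, outer_apply_val,
      interval_apply_val]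
    grind
  rcases lt_or_ge k j with hkj | hjk
  · refine res_eq_res_of_comp_eq (h := interval (k - i) 1 (by omega)) ?_ hb
    ext q
    simp only [Nat.reduceAdd, OrderHom.comp_coe, Function.comp_apply, interval_apply_val]
    grind
  · refine res_eq_res_of_comp_eq (h := interval (k - (j - i) + 1) 1 (by omega)) ?_ ha
    ext q
    simp only [Nat.reduceAdd, OrderHom.comp_coe, Function.comp_apply, outer_apply_val,
      interval_apply_val]
    grind

lemma outerRetraction_comp_outer :
    (outerRetraction i j hj).comp (outer i j hij hj) = OrderHom.id := by
  ext q
  simp only [OrderHom.comp_coe, Function.comp_apply, OrderHom.id_coe, id_eq,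
    outerRetraction_apply_val, outer_apply_val]
  grind

lemma outerRetraction_comp_interval :
    (outerRetraction i j hj).comp (interval i (j - i) (by omega)) =
      (interval i 1 (by omega)).comp (splitAt 0) := by
  ext q
  simp only [Nat.reduceAdd, OrderHom.comp_coe, Function.comp_apply, outerRetraction_apply_val,
    interval_apply_val, splitAt_apply_val]
  grind

lemma intervalRetraction_comp_interval :
    (intervalRetraction i j).comp (interval i (j - i) (by omega : i + (j - i) ≤ n)) =
      OrderHom.id := by
  ext q
  simp only [OrderHom.comp_coe, Function.comp_apply, OrderHom.id_coe, id_eq,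
    intervalRetraction_apply_val, interval_apply_val]
  grind

lemma intervalRetraction_comp_outer :
    (intervalRetraction i j).comp (outer i j hij hj) = (ends (j - i)).comp (splitAt i) := by
  ext q
  simp only [OrderHom.comp_coe, Function.comp_apply, intervalRetraction_apply_val,
    outer_apply_val, ends_apply_val, splitAt_apply_val]
  grind

theorem IsOneSkeletal.exists_res_outer_eq_and_res_interval_eq (hX : IsOneSkeletal X)
    (a : X _⦋n - (j - i) + 1⦌) (b : X _⦋j - i⦌)
    (hab : res X (interval i 1 (by omega)) a = res X (ends (j - i)) b) :
    ∃ x : X _⦋n⦌,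
      res X (outer i j hij hj) x = a ∧ res X (interval i (j - i) (by omega)) x = b := by
  by_cases hb : IsTotallyDegenerate (res X (ends (j - i)) b)
  · obtain ⟨v, rfl⟩ := hX.isTotallyDegenerate_of_res_ends (by omega) hb
    refine ⟨res X (outerRetraction i j hj) a, ?_, ?_⟩
    · rw [res_res, outerRetraction_comp_outer hij hj, res_id]
    · rw [res_res, outerRetraction_comp_interval hij hj, ← res_res, hab, res_res, res_res,
        collapse_comp]
  · have ha := hX.eq_res_splitAt_of_not_isTotallyDegenerate (p := i) (by omega) a (hab ▸ hb)
    refine ⟨res X (intervalRetraction i j) b, ?_, ?_⟩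
    · rw [res_res, intervalRetraction_comp_outer hij hj, ← res_res, ← hab, ha]
    · rw [res_res, intervalRetraction_comp_interval hij hj, res_id]

theorem IsOneSkeletal.eq_of_res_outer_eq_of_res_interval_eq (hX : IsOneSkeletal X)
    {x x' : X _⦋n⦌} (ha : res X (outer i j hij hj) x = res X (outer i j hij hj) x')
    (hb : res X (interval i (j - i) (by omega)) x = res X (interval i (j - i) (by omega)) x') :
    x = x' :=
  hX.eq_of_res_interval_one_eq (by omega)
    (res_interval_one_eq_of_res_outer_eq_of_res_interval_eq hij hj ha hb)

end TwoSegal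

/-- Every 1-skeletal simplicial set (every simplex of dimension `≥ 2`, i.e. of dimension
`m + 1` with `m ≥ 1`, is in the image of some degeneracy map) is 2-Segal. -/
theorem oneSkeletal_isTwoSegal (X : SSet.{u})
    (hskel : ∀ (m : ℕ), 1 ≤ m → ∀ x : X _⦋m + 1⦌,
      ∃ (i : ℕ) (hi : i ≤ m) (y : X _⦋m⦌), res X (degen i hi) y = x) :
    IsTwoSegal X := by
  intro n i j _ hij hj a b hab
  have hX : IsOneSkeletal X := hskel
  obtain ⟨x, hx⟩ := hX.exists_res_outer_eq_and_res_interval_eq hij hj a b hab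
  exact ⟨x, hx, fun y hy =>
    hX.eq_of_res_outer_eq_of_res_interval_eq hij hj (hy.1.trans hx.1.symm) (hy.2.trans hx.2.symm)⟩

end Seg
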